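/- arXiv:2111.03345 — 6 statements merged into one kernel-verified Lean document; each statement's English description precedes it below -/
import Mathlib

section
/- For every integer n ≥ 2, L(n) ≤ (3 / log 2) · log n, where log denotes the natural logarithm. -/
/-- The function L: L(1) = 1, L(p) = 1 + L(p-1) for primes p, and L is
additive over factorizations into primes (with multiplicity). -/
def LFun : ℕ → ℕ
  | 0 => 0
  | 1 => 1
  | n + 2 =>
    if Nat.Prime (n + 2) then 1 + LFun (n + 1)
    else LFun ((n + 2).minFac) + LFun ((n + 2) / (n + 2).minFac)
decreasing_by
  · omega
  · exact lt_of_le_of_ne (Nat.minFac_le (by omega))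
      (fun h => by exact absurd (Nat.prime_def_minFac.mpr ⟨by omega, h⟩) (by assumption))
  · exact Nat.div_lt_self (by omega) (Nat.minFac_prime (by omega)).one_lt

lemma LFun_one : LFun 1 = 1 := by rw [LFun]

lemma LFun_prime {p : ℕ} (hp : p.Prime) : LFun p = 1 + LFun (p - 1) := by
  obtain ⟨k, rfl⟩ : ∃ k, p = k + 2 := ⟨p - 2, by have := hp.two_le; omega⟩
  rw [LFun, if_pos hp]
  norm_num

lemma LFun_comp {n : ℕ} (h2 : 2 ≤ n) (hnp : ¬ n.Prime) :
    LFun n = LFun n.minFac + LFun (n / n.minFac) := by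
  obtain ⟨k, rfl⟩ : ∃ k, n = k + 2 := ⟨n - 2, by omega⟩
  rw [LFun, if_neg hnp]

lemma LFun_two : LFun 2 = 2 := by
  rw [LFun_prime Nat.prime_two]; norm_num [LFun_one]

lemma LFun_key : ∀ n, 2 ≤ n → 2 ^ (LFun n) ≤ n ^ 3 := by
  intro n
  induction n using Nat.strong_induction_on with
  | _ n ih =>
    intro hn
    by_cases hp : n.Prime
    · rcases eq_or_lt_of_le hn with h2 | h3
      · subst h2; simp [LFun_two]  -- n = 2
      rcases eq_or_lt_of_le (show 3 ≤ n from h3) with h3' | h4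
      · -- n = 3
        have : n = 3 := h3'.symm
        subst this
        rw [LFun_prime hp, LFun_two]
        norm_num
      -- n ≥ 4 prime, so n ≥ 5, odd
      have hn5 : 5 ≤ n := by
        rcases Nat.lt_or_ge n 5 with h | h
        · interval_cases n <;> simp_all <;> norm_num at hp
        · exact h
      have hodd : ¬ 2 ∣ n := by
        intro h
        have := (Nat.prime_dvd_prime_iff_eq Nat.prime_two hp).mp h
        omega
      obtain ⟨m, hm⟩ : ∃ m, n - 1 = 2 * m := ⟨(n-1)/2, by omega⟩
      have hm2 : 2 ≤ m := by omega
      have hnp1 : ¬ (n - 1).Prime := by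
        intro h
        have := (Nat.Prime.even_iff h).mp ⟨m, by omega⟩
        omega
      have hmf : (n - 1).minFac = 2 := by
        rw [Nat.minFac_eq_two_iff]; omega
      have e1 : LFun n = 3 + LFun m := by
        rw [LFun_prime hp, LFun_comp (by omega) hnp1, hmf, LFun_two]
        have : (n - 1) / 2 = m := by omega
        rw [this]
        omega
      rw [e1]
      have hmlt : m < n := by omega
      have := ih m hmlt hm2
      have h8 : 2 ^ (3 + LFun m) = 8 * 2 ^ (LFun m) := by ring
      rw [h8]
      calc 8 * 2 ^ (LFun m) ≤ 8 * m ^ 3 := by omega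
        _ = (2 * m) ^ 3 := by ring
        _ ≤ n ^ 3 := Nat.pow_le_pow_left (by omega) 3
    · -- composite
      set p := n.minFac with hpdef
      have hpp : p.Prime := Nat.minFac_prime (by omega)
      have hdvd : p ∣ n := Nat.minFac_dvd n
      obtain ⟨m, hm⟩ := hdvd
      have hm1 : m ≠ 1 := by
        intro h; rw [h, mul_one] at hm; exact hp (hm ▸ hpp)
      have hm0 : m ≠ 0 := by intro h; rw [h, mul_zero] at hm; omega
      have hm2 : 2 ≤ m := by omega
      have hdiv : n / p = m := by rw [hm]; exact Nat.mul_div_cancel_left m hpp.pos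
      have hplt : p < n := by
        have := hpp.two_le; nlinarith [hm]
      have hmlt : m < n := by
        have := hpp.two_le; nlinarith [hm]
      rw [LFun_comp hn hp, hdiv, pow_add]
      calc 2 ^ LFun p * 2 ^ LFun m ≤ p ^ 3 * m ^ 3 :=
            Nat.mul_le_mul (ih p hplt hpp.two_le) (ih m hmlt hm2)
        _ = n ^ 3 := by rw [hm]; ring

theorem stmt5 (n : ℕ) (hn : 2 ≤ n) :
    (LFun n : ℝ) ≤ 3 / Real.log 2 * Real.log n := by
  have hkey := LFun_key n hn
  have hR : (2 : ℝ) ^ (LFun n) ≤ (n : ℝ) ^ 3 := by exact_mod_cast hkey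
  have hlog2 : 0 < Real.log 2 := Real.log_pos (by norm_num)
  have hnpos : (0 : ℝ) < n := by positivity
  have hlog : Real.log ((2 : ℝ) ^ (LFun n)) ≤ Real.log ((n : ℝ) ^ 3) :=
    Real.log_le_log (by positivity) hR
  rw [Real.log_pow, Real.log_pow] at hlog
  rw [div_mul_eq_mul_div, le_div_iff₀ hlog2]
  push_cast at hlog ⊢
  linarith
end

section
/- For every integer k ≥ 1 and every real x > 0, the number of integers n with 2^k ≤ n < 2^{k+1} and ‖n‖ > 5k/2 + x·√k is at most 2·e^{−2x²}·2^k. -/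
/-- Arithmetic expressions built from 1's using addition and multiplication. -/
inductive Expr : Type where
  | one : Expr
  | add : Expr → Expr → Expr
  | mul : Expr → Expr → Expr

/-- The value of an expression. -/
def Expr.val : Expr → ℕ
  | .one => 1
  | .add a b => a.val + b.val
  | .mul a b => a.val * b.val

/-- The number of 1's used in an expression. -/
def Expr.cost : Expr → ℕ
  | .one => 1
  | .add a b => a.cost + b.cost
  | .mul a b => a.cost + b.cost

/-- The integer complexity ‖n‖: the least number of 1's needed to write `n`
as an expression built from 1's using only addition and multiplication. -/
noncomputable def cplx (n : ℕ) : ℕ :=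
  sInf {k | ∃ e : Expr, e.val = n ∧ e.cost = k}

lemma exists_expr : ∀ n : ℕ, 1 ≤ n → ∃ e : Expr, e.val = n := by
  intro n hn
  induction n with
  | zero => omega
  | succ m ih =>
    rcases Nat.eq_zero_or_pos m with h | h
    · exact ⟨.one, by simp [h, Expr.val]⟩
    · obtain ⟨e, he⟩ := ih h
      exact ⟨.add e .one, by simp [Expr.val, he]⟩

lemma cplx_le {n : ℕ} (e : Expr) (he : e.val = n) : cplx n ≤ e.cost :=
  Nat.sInf_le ⟨e, he, rfl⟩

lemma cplx_spec {n : ℕ} (hn : 1 ≤ n) : ∃ e : Expr, e.val = n ∧ e.cost = cplx n := by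
  obtain ⟨e, he⟩ := exists_expr n hn
  have hne : {k | ∃ e : Expr, e.val = n ∧ e.cost = k}.Nonempty := ⟨e.cost, e, he, rfl⟩
  exact Nat.sInf_mem hne

lemma cplx_two_mul {m : ℕ} (hm : 1 ≤ m) : cplx (2 * m) ≤ cplx m + 2 := by
  obtain ⟨e, he, hc⟩ := cplx_spec hm
  have := cplx_le (n := 2 * m) (.mul (.add .one .one) e) (by simp [Expr.val, he])
  simpa [Expr.cost, hc, add_comm] using this

lemma cplx_two_mul_add_one {m : ℕ} (hm : 1 ≤ m) : cplx (2 * m + 1) ≤ cplx m + 3 := by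
  obtain ⟨e, he, hc⟩ := cplx_spec hm
  have := cplx_le (n := 2 * m + 1) (.add (.mul (.add .one .one) e) .one)
    (by simp [Expr.val, he])
  simp only [Expr.cost, hc] at this
  omega

/-- binary popcount -/
def pc (n : ℕ) : ℕ := (Nat.digits 2 n).sum

lemma pc_zero : pc 0 = 0 := by simp [pc]

lemma pc_two_mul {m : ℕ} (hm : 1 ≤ m) : pc (2 * m) = pc m := by
  unfold pc
  rw [Nat.digits_def' (by norm_num) (by omega)]
  have h1 : 2 * m % 2 = 0 := by omega
  have h2 : 2 * m / 2 = m := by omega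
  rw [h1, h2]
  simp

lemma pc_two_mul_add_one (m : ℕ) : pc (2 * m + 1) = pc m + 1 := by
  unfold pc
  rw [Nat.digits_def' (by norm_num) (by omega)]
  have h1 : (2 * m + 1) % 2 = 1 := by omega
  have h2 : (2 * m + 1) / 2 = m := by omega
  rw [h1, h2]
  simp [add_comm]

lemma log2_two_mul {m : ℕ} (hm : 1 ≤ m) : Nat.log 2 (2 * m) = Nat.log 2 m + 1 := by
  rw [mul_comm]
  exact Nat.log_mul_base (by norm_num) (by omega)

lemma log2_two_mul_add_one {m : ℕ} (hm : 1 ≤ m) :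
    Nat.log 2 (2 * m + 1) = Nat.log 2 m + 1 := by
  have h1 : 2 ^ Nat.log 2 m ≤ m := Nat.pow_log_le_self 2 (by omega)
  have h2 : m < 2 ^ (Nat.log 2 m + 1) := Nat.lt_pow_succ_log_self (by norm_num) m
  refine Nat.log_eq_of_pow_le_of_lt_pow ?_ ?_
  · rw [pow_succ]; omega
  · rw [pow_succ, pow_succ]; omega

lemma cplx_bound : ∀ n : ℕ, 2 ≤ n → cplx n + 1 ≤ 2 * Nat.log 2 n + pc n := by
  intro n
  induction n using Nat.strong_induction_on with
  | _ n ih =>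
    intro hn
    rcases Nat.lt_or_ge n 4 with h4 | h4
    · interval_cases n
      · -- n = 2
        have h := cplx_le (n := 2) (.add .one .one) (by simp [Expr.val])
        have hpc1 : pc 1 = 1 := by
          have := pc_two_mul_add_one 0
          simpa [pc_zero] using this
        have hpc : pc 2 = 1 := by
          have := pc_two_mul (m := 1) le_rfl
          simpa [hpc1] using this
        have hl : Nat.log 2 2 = 1 := by
          have := log2_two_mul (m := 1) le_rfl
          simpa using this
        simp only [Expr.cost] at h
        omega
      · -- n = 3
        have h := cplx_le (n := 3) (.add (.add .one .one) .one) (by simp [Expr.val])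
        have hpc1 : pc 1 = 1 := by
          have := pc_two_mul_add_one 0
          simpa [pc_zero] using this
        have hpc : pc 3 = 2 := by
          have := pc_two_mul_add_one 1
          simpa [hpc1] using this
        have hl : Nat.log 2 3 = 1 := by
          have := log2_two_mul_add_one (m := 1) le_rfl
          simpa using this
        simp only [Expr.cost] at h
        omega
    · set m := n / 2 with hm
      have hm2 : 2 ≤ m := by omega
      have hrec := ih m (by omega) hm2
      rcases Nat.even_or_odd n with ⟨c, hc⟩ | ⟨c, hc⟩
      · have hn2 : n = 2 * m := by omega
        have h1 := cplx_two_mul (m := m) (by omega)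
        rw [hn2, log2_two_mul (by omega), pc_two_mul (by omega)]
        omega
      · have hn2 : n = 2 * m + 1 := by omega
        have h1 := cplx_two_mul_add_one (m := m) (by omega)
        rw [hn2, log2_two_mul_add_one (by omega), pc_two_mul_add_one]
        omega

lemma sum_Ico_double (f : ℕ → ℝ) (a b : ℕ) :
    ∑ n ∈ Finset.Ico (2 * a) (2 * b), f n
      = ∑ m ∈ Finset.Ico a b, (f (2 * m) + f (2 * m + 1)) := by
  induction b with
  | zero => simp
  | succ b ih =>
    rcases Nat.lt_or_ge b a with h | h
    · rw [Finset.Ico_eq_empty (by omega), Finset.Ico_eq_empty (by omega)]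
      simp
    · have h1 : 2 * a ≤ 2 * b := by omega
      have e1 : 2 * (b + 1) = (2 * b + 1) + 1 := by ring
      rw [e1, Finset.sum_Ico_succ_top (by omega), Finset.sum_Ico_succ_top h1,
        Finset.sum_Ico_succ_top h, ih]
      ring

lemma chernoff_sum (t : ℝ) : ∀ k : ℕ,
    ∑ n ∈ Finset.Ico (2 ^ k) (2 ^ (k + 1)), Real.exp (t * pc n)
      = Real.exp t * (1 + Real.exp t) ^ k := by
  intro k
  induction k with
  | zero =>
    have : Finset.Ico (2 ^ 0) (2 ^ 1) = {1} := rfl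
    rw [this]
    have : pc 1 = 1 := by
      have := pc_two_mul_add_one 0
      simpa [pc_zero] using this
    simp [this]
  | succ k ih =>
    have e1 : (2 : ℕ) ^ (k + 1) = 2 * 2 ^ k := by ring
    have e2 : (2 : ℕ) ^ (k + 1 + 1) = 2 * 2 ^ (k + 1) := by ring
    rw [e1, e2, sum_Ico_double]
    have : ∀ m ∈ Finset.Ico (2 ^ k) (2 ^ (k + 1)),
        Real.exp (t * pc (2 * m)) + Real.exp (t * pc (2 * m + 1))
          = Real.exp (t * pc m) * (1 + Real.exp t) := by
      intro m hm
      simp only [Finset.mem_Ico] at hm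
      have hm1 : 1 ≤ m := le_trans (Nat.one_le_two_pow) hm.1
      rw [pc_two_mul hm1, pc_two_mul_add_one]
      push_cast
      rw [mul_add, Real.exp_add]
      ring
    rw [Finset.sum_congr rfl this, ← Finset.sum_mul, ih]
    ring

theorem stmt7 (k : ℕ) (hk : 1 ≤ k) (x : ℝ) (hx : 0 < x) :
    (Set.ncard {n : ℕ | 2 ^ k ≤ n ∧ n < 2 ^ (k + 1) ∧
        5 * (k : ℝ) / 2 + x * Real.sqrt k < (cplx n : ℝ)} : ℝ)
      ≤ 2 * Real.exp (-2 * x ^ 2) * 2 ^ k := by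
  classical
  set P : ℕ → Prop := fun n => 5 * (k : ℝ) / 2 + x * Real.sqrt k < (cplx n : ℝ)
  set S : Finset ℕ := (Finset.Ico (2 ^ k) (2 ^ (k + 1))).filter P with hS
  have hset : {n : ℕ | 2 ^ k ≤ n ∧ n < 2 ^ (k + 1) ∧
      5 * (k : ℝ) / 2 + x * Real.sqrt k < (cplx n : ℝ)} = ↑S := by
    ext n
    simp [hS, Finset.mem_Ico, P, and_assoc]
  rw [hset, Set.ncard_coe_finset]
  -- parameters
  have hsq : Real.sqrt k > 0 := Real.sqrt_pos.mpr (by positivity)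
  have hsqk : (Real.sqrt k) ^ 2 = k := Real.sq_sqrt (by positivity)
  set t : ℝ := 4 * x / Real.sqrt k with ht
  have ht0 : 0 ≤ t := by positivity
  set μ : ℝ := (k : ℝ) / 2 + x * Real.sqrt k + 1 with hμ
  -- each n in S has (pc n : ℝ) ≥ μ
  have key : ∀ n ∈ S, μ ≤ (pc n : ℝ) := by
    intro n hn
    simp only [hS, Finset.mem_filter, Finset.mem_Ico] at hn
    obtain ⟨⟨h1, h2⟩, h3⟩ := hn
    have hn2 : 2 ≤ n := le_trans (by have := Nat.one_lt_two_pow_iff.mpr (by omega : k ≠ 0); omega) h1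
    have hlog : Nat.log 2 n = k :=
      Nat.log_eq_of_pow_le_of_lt_pow h1 h2
    have hb := cplx_bound n hn2
    rw [hlog] at hb
    have hbR : (cplx n : ℝ) + 1 ≤ 2 * k + pc n := by exact_mod_cast hb
    simp only [P] at h3
    rw [hμ]
    linarith
  -- count ≤ chernoff
  have hcard : (S.card : ℝ) ≤ Real.exp (-(t * μ)) *
      ∑ n ∈ Finset.Ico (2 ^ k) (2 ^ (k + 1)), Real.exp (t * pc n) := by
    rw [Finset.mul_sum]
    have h1 : (S.card : ℝ) = ∑ n ∈ S, (1 : ℝ) := by simp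
    rw [h1]
    calc ∑ n ∈ S, (1 : ℝ) ≤ ∑ n ∈ S, Real.exp (-(t * μ)) * Real.exp (t * pc n) := by
          apply Finset.sum_le_sum
          intro n hn
          rw [← Real.exp_add]
          have : 0 ≤ -(t * μ) + t * pc n := by
            have := key n hn
            nlinarith
          calc (1 : ℝ) = Real.exp 0 := by simp
            _ ≤ _ := Real.exp_le_exp.mpr this
      _ ≤ _ := by
          apply Finset.sum_le_sum_of_subset_of_nonneg (Finset.filter_subset _ _)
          intro n _ _
          positivity
  rw [chernoff_sum] at hcard
  -- bound (1 + exp t)^k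
  have hcosh : 1 + Real.exp t ≤ 2 * Real.exp (t / 2 + t ^ 2 / 8) := by
    have h := Real.cosh_le_exp_half_sq (t / 2)
    rw [Real.cosh_eq] at h
    have h2 : Real.exp (-(t/2)) + Real.exp (t/2) ≤ 2 * Real.exp ((t/2)^2/2) := by
      linarith
    have := mul_le_mul_of_nonneg_left h2 (Real.exp_pos (t/2)).le
    calc 1 + Real.exp t = Real.exp (t/2) * (Real.exp (-(t/2)) + Real.exp (t/2)) := by
          rw [mul_add, ← Real.exp_add, ← Real.exp_add]
          ring_nf
          rw [Real.exp_zero]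
          ring
      _ ≤ Real.exp (t/2) * (2 * Real.exp ((t/2)^2/2)) := this
      _ = 2 * Real.exp (t / 2 + t ^ 2 / 8) := by
          rw [← mul_assoc, mul_comm (Real.exp (t/2)) 2, mul_assoc, ← Real.exp_add]
          ring_nf
  have hpow : (1 + Real.exp t) ^ k ≤ (2 * Real.exp (t / 2 + t ^ 2 / 8)) ^ k := by
    apply pow_le_pow_left₀ (by positivity) hcosh
  have hfinal : Real.exp (-(t * μ)) * (Real.exp t * (1 + Real.exp t) ^ k)
      ≤ Real.exp (-2 * x ^ 2) * 2 ^ k := by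
    calc Real.exp (-(t * μ)) * (Real.exp t * (1 + Real.exp t) ^ k)
        ≤ Real.exp (-(t * μ)) * (Real.exp t * (2 * Real.exp (t / 2 + t ^ 2 / 8)) ^ k) := by
          apply mul_le_mul_of_nonneg_left _ (Real.exp_pos _).le
          exact mul_le_mul_of_nonneg_left hpow (Real.exp_pos _).le
      _ = 2 ^ k * Real.exp (-(t * μ) + t + k * (t / 2 + t ^ 2 / 8)) := by
          rw [mul_pow, ← Real.exp_nat_mul, Real.exp_add, Real.exp_add]
          ring
      _ ≤ 2 ^ k * Real.exp (-2 * x ^ 2) := by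
          apply mul_le_mul_of_nonneg_left _ (by positivity)
          apply Real.exp_le_exp.mpr
          -- exponent computation
          have htsq : t ^ 2 = 16 * x ^ 2 / k := by
            rw [ht, div_pow]
            rw [hsqk]
            ring
          have htk : t * Real.sqrt k = 4 * x := by
            rw [ht, div_mul_eq_mul_div, mul_div_assoc]
            rw [div_self (ne_of_gt hsq)]
            ring
          have hk1 : (1 : ℝ) ≤ k := by exact_mod_cast hk
          have hkpos : (0 : ℝ) < k := by linarith
          have h1 : t * (x * Real.sqrt k) = 4 * x ^ 2 := by
            rw [mul_comm x, ← mul_assoc, htk]; ring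
          have h2 : (k : ℝ) * t ^ 2 = 16 * x ^ 2 := by
            rw [htsq]; field_simp
          rw [hμ]
          nlinarith [h1, h2]
      _ = Real.exp (-2 * x ^ 2) * 2 ^ k := by ring
  calc (S.card : ℝ) ≤ Real.exp (-(t * μ)) * (Real.exp t * (1 + Real.exp t) ^ k) := hcard
    _ ≤ Real.exp (-2 * x ^ 2) * 2 ^ k := hfinal
    _ ≤ 2 * Real.exp (-2 * x ^ 2) * 2 ^ k := by
        have := Real.exp_pos (-2 * x ^ 2)
        nlinarith [pow_pos (show (0:ℝ) < 2 by norm_num) k]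
end

section
/- For every a ∈ {0, 1, 2} and every natural number b, with (a, b) ≠ (0, 0), one has ‖2^a · 3^b‖ = 2a + 3b. -/
/-- Maximal value of an expression of cost `k`. -/
def E : ℕ → ℕ
  | 0 => 0
  | 1 => 1
  | 2 => 2
  | 3 => 3
  | 4 => 4
  | (n+5) => 3 * E (n+2)

lemma E_step (n : ℕ) : E (n+5) = 3 * E (n+2) := rfl

lemma E_triple (t : ℕ) (ht : 1 ≤ t) : 3 * E t ≤ E (t+3) := by
  match t with
  | 1 => decide
  | (s+2) => exact le_of_eq (E_step s).symm

lemma E_succ_le (n : ℕ) : E n ≤ E (n+1) := by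
  induction n using Nat.strong_induction_on with
  | _ n ih =>
    match n with
    | 0 => decide
    | 1 => decide
    | 2 => decide
    | 3 => decide
    | 4 => decide
    | (m+5) =>
      have h : E (m+2) ≤ E (m+3) := ih (m+2) (by omega)
      calc E (m+5) = 3 * E (m+2) := rfl
        _ ≤ 3 * E (m+3) := by omega
        _ = E (m+6) := (E_step (m+1)).symm

lemma E_mono : Monotone E := monotone_nat_of_le_succ E_succ_le

lemma E_add : ∀ (k i j : ℕ), i + j ≤ k → 1 ≤ i → 1 ≤ j → E i + E j ≤ E (i + j) := by
  intro k
  induction k with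
  | zero => intro i j h hi hj; omega
  | succ k ih =>
    intro i j hk hi hj
    by_cases h5 : 5 ≤ j
    · obtain ⟨m, rfl⟩ : ∃ m, j = m + 5 := ⟨j - 5, by omega⟩
      have h1 := ih i (m+2) (by omega) hi (by omega)
      have h2 := E_triple (i + (m+2)) (by omega)
      have e2 : i + (m+5) = i + (m+2) + 3 := by omega
      rw [e2]
      have e1 : E (m+5) = 3 * E (m+2) := rfl
      omega
    · by_cases h5' : 5 ≤ i
      · obtain ⟨m, rfl⟩ : ∃ m, i = m + 5 := ⟨i - 5, by omega⟩
        have h1 := ih (m+2) j (by omega) (by omega) hj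
        have h2 := E_triple (m+2 + j) (by omega)
        have e2 : m + 5 + j = m + 2 + j + 3 := by omega
        rw [e2]
        have e1 : E (m+5) = 3 * E (m+2) := rfl
        omega
      · have hi4 : i ≤ 4 := by omega
        have hj4 : j ≤ 4 := by omega
        interval_cases i <;> interval_cases j <;> decide

lemma E_mul : ∀ (k i j : ℕ), i + j ≤ k → 1 ≤ i → 1 ≤ j → E i * E j ≤ E (i + j) := by
  intro k
  induction k with
  | zero => intro i j h hi hj; omega
  | succ k ih =>
    intro i j hk hi hj
    by_cases h5 : 5 ≤ j
    · obtain ⟨m, rfl⟩ : ∃ m, j = m + 5 := ⟨j - 5, by omega⟩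
      have h1 := ih i (m+2) (by omega) hi (by omega)
      have h2 := E_triple (i + (m+2)) (by omega)
      have e2 : i + (m+5) = i + (m+2) + 3 := by omega
      rw [e2]
      calc E i * E (m+5) = 3 * (E i * E (m+2)) := by rw [E_step]; ring
        _ ≤ 3 * E (i + (m+2)) := by omega
        _ ≤ E (i + (m+2) + 3) := h2
    · by_cases h5' : 5 ≤ i
      · obtain ⟨m, rfl⟩ : ∃ m, i = m + 5 := ⟨i - 5, by omega⟩
        have h1 := ih (m+2) j (by omega) (by omega) hj
        have h2 := E_triple (m+2 + j) (by omega)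
        have e2 : m + 5 + j = m + 2 + j + 3 := by omega
        rw [e2]
        calc E (m+5) * E j = 3 * (E (m+2) * E j) := by rw [E_step]; ring
          _ ≤ 3 * E (m+2 + j) := by omega
          _ ≤ E (m+2 + j + 3) := h2
      · have hi4 : i ≤ 4 := by omega
        have hj4 : j ≤ 4 := by omega
        interval_cases i <;> interval_cases j <;> decide

lemma expr_bound (e : Expr) : 1 ≤ e.cost ∧ e.val ≤ E e.cost := by
  induction e with
  | one => exact ⟨le_refl 1, le_refl 1⟩
  | add a b iha ihb =>
    obtain ⟨ha1, ha2⟩ := iha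
    obtain ⟨hb1, hb2⟩ := ihb
    refine ⟨by simp [Expr.cost]; omega, ?_⟩
    calc (Expr.add a b).val = a.val + b.val := rfl
      _ ≤ E a.cost + E b.cost := by omega
      _ ≤ E (a.cost + b.cost) := E_add _ _ _ le_rfl ha1 hb1
      _ = E (Expr.add a b).cost := rfl
  | mul a b iha ihb =>
    obtain ⟨ha1, ha2⟩ := iha
    obtain ⟨hb1, hb2⟩ := ihb
    refine ⟨by simp [Expr.cost]; omega, ?_⟩
    calc (Expr.mul a b).val = a.val * b.val := rfl
      _ ≤ E a.cost * E b.cost := Nat.mul_le_mul ha2 hb2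
      _ ≤ E (a.cost + b.cost) := E_mul _ _ _ le_rfl ha1 hb1
      _ = E (Expr.mul a b).cost := rfl

/-- Witness expression for 3^(b+1). -/
def threes : ℕ → Expr
  | 0 => .add (.add .one .one) .one
  | (b+1) => .mul (.add (.add .one .one) .one) (threes b)

lemma threes_val (b : ℕ) : (threes b).val = 3 ^ (b+1) := by
  induction b with
  | zero => rfl
  | succ b ih => simp [threes, Expr.val, ih, pow_succ]; ring

lemma threes_cost (b : ℕ) : (threes b).cost = 3 * (b+1) := by
  induction b with
  | zero => rfl
  | succ b ih => simp [threes, Expr.cost, ih]; ring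

/-- Witness expression for 2^(a+1). -/
def twos : ℕ → Expr
  | 0 => .add .one .one
  | (a+1) => .mul (.add .one .one) (twos a)

lemma twos_val (a : ℕ) : (twos a).val = 2 ^ (a+1) := by
  induction a with
  | zero => rfl
  | succ a ih => simp [twos, Expr.val, ih, pow_succ]; ring

lemma twos_cost (a : ℕ) : (twos a).cost = 2 * (a+1) := by
  induction a with
  | zero => rfl
  | succ a ih => simp [twos, Expr.cost, ih]; ring

lemma E_3b2 (b : ℕ) : E (3*b+2) = 2 * 3^b := by
  induction b with
  | zero => rfl
  | succ b ih =>
    rw [show 3*(b+1)+2 = (3*b)+5 from by ring, E_step, ih, pow_succ]; ring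

lemma E_3b3 (b : ℕ) : E (3*b+3) = 3 * 3^b := by
  induction b with
  | zero => rfl
  | succ b ih =>
    rw [show 3*(b+1)+3 = (3*b+1)+5 from by ring, E_step,
      show 3*b+1+2 = 3*b+3 from by ring, ih, pow_succ]; ring

lemma E_3b4 (b : ℕ) : E (3*b+4) = 4 * 3^b := by
  induction b with
  | zero => rfl
  | succ b ih =>
    rw [show 3*(b+1)+4 = (3*b+2)+5 from by ring, E_step,
      show 3*b+2+2 = 3*b+4 from by ring, ih, pow_succ]; ring

lemma mem_set (a b : ℕ) (hab : ¬(a = 0 ∧ b = 0)) :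
    ∃ e : Expr, e.val = 2 ^ a * 3 ^ b ∧ e.cost = 2 * a + 3 * b := by
  match a, b with
  | 0, 0 => exact absurd ⟨rfl, rfl⟩ hab
  | 0, (b+1) => exact ⟨threes b, by rw [threes_val]; ring, by rw [threes_cost]; ring⟩
  | (a+1), 0 => exact ⟨twos a, by rw [twos_val]; ring, by rw [twos_cost]; ring⟩
  | (a+1), (b+1) =>
    refine ⟨.mul (twos a) (threes b), ?_, ?_⟩
    · show (twos a).val * (threes b).val = _
      rw [twos_val, threes_val]
    · show (twos a).cost + (threes b).cost = _
      rw [twos_cost, threes_cost]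

theorem stmt10 (a b : ℕ) (ha : a ≤ 2) (hab : ¬(a = 0 ∧ b = 0)) :
    cplx (2 ^ a * 3 ^ b) = 2 * a + 3 * b := by
  have hmem : (2 * a + 3 * b) ∈ {k | ∃ e : Expr, e.val = 2 ^ a * 3 ^ b ∧ e.cost = k} :=
    mem_set a b hab
  have hlb : ∀ m ∈ {k | ∃ e : Expr, e.val = 2 ^ a * 3 ^ b ∧ e.cost = k},
      2 * a + 3 * b ≤ m := by
    rintro m ⟨e, hval, rfl⟩
    by_contra hlt
    push_neg at hlt
    obtain ⟨hc1, hc2⟩ := expr_bound e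
    have hmono : E e.cost ≤ E (2 * a + 3 * b - 1) := E_mono (by omega)
    have hbig : E (2 * a + 3 * b - 1) < 2 ^ a * 3 ^ b := by
      interval_cases a
      · -- a = 0, b ≥ 1
        obtain ⟨c, rfl⟩ : ∃ c, b = c + 1 := ⟨b - 1, by omega⟩
        rw [show 2*0+3*(c+1)-1 = 3*c+2 from by omega, E_3b2,
          show (3:ℕ)^(c+1) = 3*3^c from by ring]
        have : 1 ≤ 3^c := Nat.one_le_pow _ _ (by norm_num)
        have h20 : (2:ℕ)^0 = 1 := rfl
        omega
      · -- a = 1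
        rw [show 2*1+3*b-1 = 3*b+1 from by omega]
        match b with
        | 0 => decide
        | (c+1) =>
          rw [show 3*(c+1)+1 = 3*c+4 from by ring, E_3b4,
            show (3:ℕ)^(c+1) = 3*3^c from by ring]
          have : 1 ≤ 3^c := Nat.one_le_pow _ _ (by norm_num)
          have h21 : (2:ℕ)^1 = 2 := rfl
          omega
      · -- a = 2
        rw [show 2*2+3*b-1 = 3*b+3 from by omega, E_3b3]
        have : 1 ≤ 3^b := Nat.one_le_pow _ _ (by norm_num)
        have h22 : (2:ℕ)^2 = 4 := rfl
        omega
    have : e.val < 2 ^ a * 3 ^ b := lt_of_le_of_lt (le_trans hc2 hmono) hbig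
    omega
  exact le_antisymm (Nat.sInf_le hmem) (le_csInf ⟨_, hmem⟩ hlb)
end

section
/- For every integer a ≥ 1 and every positive integer n: if 3^a ≤ n < 4·3^{a−1} then ‖n‖ ≥ 3a; if 4·3^{a−1} ≤ n < 2·3^a then ‖n‖ ≥ 3a + 1; and if 2·3^a ≤ n < 3^{a+1} then ‖n‖ ≥ 3a + 2. -/
namespace ICAux

def f : ℕ → ℕ
  | 0 => 0
  | 1 => 1
  | 2 => 2
  | 3 => 3
  | 4 => 4
  | (n+5) => 3 * f (n+2)

lemma f_rec (m : ℕ) : f (m+5) = 3 * f (m+2) := rfl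

lemma f_succ : ∀ m, f (m+1) + 1 ≤ f (m+2) := by
  intro m
  induction m using Nat.strong_induction_on with
  | _ m ih =>
    match m with
    | 0 => decide
    | 1 => decide
    | 2 => decide
    | 3 => decide
    | (j+4) =>
      have h : f (j+2) + 1 ≤ f (j+3) := ih (j+1) (by omega)
      have e1 : f (j+4+1) = 3 * f (j+2) := f_rec j
      have e2 : f (j+4+2) = 3 * f (j+3) := f_rec (j+1)
      omega

lemma f_mono_succ (m : ℕ) : f (m+1) ≤ f (m+2) := by have := f_succ m; omega

lemma f_mono_add : ∀ k m, f (m+1) ≤ f (m+1+k) := by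
  intro k
  induction k with
  | zero => intro m; exact le_refl _
  | succ k ih =>
      intro m
      calc f (m+1) ≤ f (m+1+k) := ih m
        _ ≤ f (m+1+(k+1)) := by
            have : f (m+k+1) ≤ f (m+k+2) := f_mono_succ (m+k)
            have e1 : m+1+k = m+k+1 := by omega
            have e2 : m+1+(k+1) = m+k+2 := by omega
            rw [e1, e2]; exact this

lemma f_mono {a b : ℕ} (ha : 1 ≤ a) (hab : a ≤ b) : f a ≤ f b := by
  obtain ⟨x, rfl⟩ := Nat.exists_eq_add_of_le ha
  obtain ⟨k, rfl⟩ := Nat.exists_eq_add_of_le hab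
  have := f_mono_add k x
  calc f (1+x) = f (x+1) := by rw [Nat.add_comm]
    _ ≤ f (x+1+k) := this
    _ = f (1+x+k) := by rw [Nat.add_comm x 1]

lemma f_two_le : ∀ m, 2 ≤ f (m+2) := by
  intro m
  have := f_mono (a := 2) (b := m+2) (by omega) (by omega)
  simpa [show f 2 = 2 from rfl] using this

lemma f_two_mul : ∀ b, 2 * f (b+1) ≤ f (b+3) := by
  intro b
  induction b using Nat.strong_induction_on with
  | _ b ih =>
    match b with
    | 0 => decide
    | 1 => decide
    | 2 => decide
    | 3 => decide
    | (j+4) =>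
      have h : 2 * f (j+2) ≤ f (j+4) := ih (j+1) (by omega)
      have e1 : f (j+4+1) = 3 * f (j+2) := f_rec j
      have e2 : f (j+4+3) = 3 * f (j+4) := f_rec (j+2)
      omega

lemma f_three_mul : ∀ b, 3 * f (b+1) ≤ f (b+4) := by
  intro b
  match b with
  | 0 => decide
  | (j+1) =>
      have e1 : f (j+1+4) = 3 * f (j+2) := f_rec j
      rw [e1]

lemma f_four_mul : ∀ b, 4 * f (b+1) ≤ f (b+5) := by
  intro b
  induction b using Nat.strong_induction_on with
  | _ b ih =>
    match b with
    | 0 => decide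
    | 1 => decide
    | 2 => decide
    | 3 => decide
    | (j+4) =>
      have h : 4 * f (j+2) ≤ f (j+6) := ih (j+1) (by omega)
      have e1 : f (j+4+1) = 3 * f (j+2) := f_rec j
      have e2 : f (j+4+5) = 3 * f (j+6) := f_rec (j+4)
      omega

lemma f_mul : ∀ a b, f (a+1) * f (b+1) ≤ f (a+b+2) := by
  intro a
  induction a using Nat.strong_induction_on with
  | _ a ih =>
    match a with
    | 0 =>
        intro b
        simpa [f] using f_mono_succ b
    | 1 =>
        intro b
        have := f_two_mul b
        have e : (1:ℕ)+b+2 = b+3 := by omega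
        rw [e]; simpa [f] using this
    | 2 =>
        intro b
        have := f_three_mul b
        have e : (2:ℕ)+b+2 = b+4 := by omega
        rw [e]; simpa [f] using this
    | 3 =>
        intro b
        have := f_four_mul b
        have e : (3:ℕ)+b+2 = b+5 := by omega
        rw [e]; simpa [f] using this
    | (j+4) =>
        intro b
        have h : f (j+2) * f (b+1) ≤ f (j+1+b+2) := ih (j+1) (by omega) b
        have e1 : f (j+4+1) = 3 * f (j+2) := f_rec j
        have e2 : f (j+4+b+2) = 3 * f (j+b+3) := by
          rw [show j+4+b+2 = (j+b+1)+5 by omega, f_rec,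
            show j+b+1+2 = j+b+3 by omega]
        have e3 : j+1+b+2 = j+b+3 := by omega
        rw [e3] at h
        rw [e1, e2, Nat.mul_assoc]
        exact Nat.mul_le_mul_left 3 h

lemma f_add : ∀ a b, f (a+1) + f (b+1) ≤ f (a+b+2) := by
  intro a b
  match a, b with
  | 0, b => simpa [f, Nat.add_comm] using f_succ b
  | (j+1), 0 =>
      have := f_succ (j+1)
      have e : j+1+0+2 = j+3 := by omega
      rw [e]; simpa [f] using this
  | (j+1), (k+1) =>
      have h2 : 2 ≤ f (j+2) := f_two_le j
      have h3 : 2 ≤ f (k+2) := f_two_le k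
      have hle : f (j+2) + f (k+2) ≤ f (j+2) * f (k+2) := by nlinarith
      have hm : f (j+2) * f (k+2) ≤ f (j+1+(k+1)+2) := by
        have := f_mul (j+1) (k+1)
        have e : j+1+(k+1)+2 = j+1+(k+1)+2 := rfl
        simpa using this
      exact le_trans hle hm

lemma cost_pos : ∀ e : Expr, 1 ≤ e.cost := by
  intro e
  induction e with
  | one => simp [Expr.cost]
  | add a b iha ihb => simp [Expr.cost]; omega
  | mul a b iha ihb => simp [Expr.cost]; omega

lemma val_le_f : ∀ e : Expr, e.val ≤ f e.cost := by
  intro e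
  induction e with
  | one => simp [Expr.val, Expr.cost, f]
  | add a b iha ihb =>
      obtain ⟨x, hx⟩ := Nat.exists_eq_add_of_le (cost_pos a)
      obtain ⟨y, hy⟩ := Nat.exists_eq_add_of_le (cost_pos b)
      have hx' : a.cost = x + 1 := by omega
      have hy' : b.cost = y + 1 := by omega
      have h := f_add x y
      show a.val + b.val ≤ f (a.cost + b.cost)
      have e : a.cost + b.cost = x + y + 2 := by omega
      rw [e]
      rw [hx'] at iha; rw [hy'] at ihb
      omega
  | mul a b iha ihb =>
      obtain ⟨x, hx⟩ := Nat.exists_eq_add_of_le (cost_pos a)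
      obtain ⟨y, hy⟩ := Nat.exists_eq_add_of_le (cost_pos b)
      have hx' : a.cost = x + 1 := by omega
      have hy' : b.cost = y + 1 := by omega
      have h := f_mul x y
      show a.val * b.val ≤ f (a.cost + b.cost)
      have e : a.cost + b.cost = x + y + 2 := by omega
      rw [e]
      rw [hx'] at iha; rw [hy'] at ihb
      calc a.val * b.val ≤ f (x+1) * f (y+1) := Nat.mul_le_mul iha ihb
        _ ≤ f (x+y+2) := h

def rep : ℕ → Expr
  | 0 => .one
  | (n+1) => .add (rep n) .one

lemma rep_val : ∀ n, (rep n).val = n + 1 := by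
  intro n
  induction n with
  | zero => rfl
  | succ n ih => simp [rep, Expr.val, ih]

lemma cplx_spec (n : ℕ) (hn : 0 < n) :
    ∃ e : Expr, e.val = n ∧ e.cost = cplx n := by
  have hne : {k | ∃ e : Expr, e.val = n ∧ e.cost = k}.Nonempty := by
    refine ⟨(rep (n-1)).cost, rep (n-1), ?_, rfl⟩
    rw [rep_val]; omega
  exact Nat.sInf_mem hne

lemma n_le_f_cplx (n : ℕ) (hn : 0 < n) : n ≤ f (cplx n) ∧ 1 ≤ cplx n := by
  obtain ⟨e, hv, hc⟩ := cplx_spec n hn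
  constructor
  · rw [← hc, ← hv]; exact val_le_f e
  · rw [← hc]; exact cost_pos e

lemma f_3a : ∀ a, f (3*a+3) = 3^(a+1) := by
  intro a
  induction a with
  | zero => decide
  | succ a ih =>
      have e : 3*(a+1)+3 = (3*a+1)+5 := by omega
      rw [e, f_rec (3*a+1)]
      have e2 : 3*a+1+2 = 3*a+3 := by omega
      rw [e2, ih, pow_succ]
      ring

lemma f_3a1 : ∀ a, f (3*a+4) = 4 * 3^a := by
  intro a
  induction a with
  | zero => decide
  | succ a ih =>
      have e : 3*(a+1)+4 = (3*a+2)+5 := by omega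
      rw [e, f_rec (3*a+2)]
      have e2 : 3*a+2+2 = 3*a+4 := by omega
      rw [e2, ih, pow_succ]
      ring

lemma f_3a2 : ∀ a, f (3*a+2) = 2 * 3^a := by
  intro a
  induction a with
  | zero => decide
  | succ a ih =>
      have e : 3*(a+1)+2 = 3*a+5 := by omega
      rw [e, f_rec (3*a)]
      rw [ih, pow_succ]
      ring

end ICAux

open ICAux in
theorem stmt12 (a : ℕ) (ha : 1 ≤ a) (n : ℕ) (hn : 0 < n) :
    (3 ^ a ≤ n → n < 4 * 3 ^ (a - 1) → 3 * a ≤ cplx n) ∧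
    (4 * 3 ^ (a - 1) ≤ n → n < 2 * 3 ^ a → 3 * a + 1 ≤ cplx n) ∧
    (2 * 3 ^ a ≤ n → n < 3 ^ (a + 1) → 3 * a + 2 ≤ cplx n) := by
  obtain ⟨b, rfl⟩ : ∃ b, a = b + 1 := ⟨a - 1, by omega⟩
  obtain ⟨hle, hpos⟩ := n_le_f_cplx n hn
  have hp : 1 ≤ 3^b := Nat.one_le_pow _ _ (by norm_num)
  have hpow : (3:ℕ)^(b+1) = 3 * 3^b := pow_succ' 3 b
  refine ⟨?_, ?_, ?_⟩
  · intro h1 _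
    by_contra hc
    push_neg at hc
    have hcle : cplx n ≤ 3*b+2 := by omega
    have : f (cplx n) ≤ f (3*b+2) := f_mono hpos hcle
    rw [f_3a2 b] at this
    omega
  · intro h1 _
    by_contra hc
    push_neg at hc
    have hcle : cplx n ≤ 3*b+3 := by omega
    have : f (cplx n) ≤ f (3*b+3) := f_mono hpos hcle
    rw [f_3a b] at this
    simp only [Nat.add_sub_cancel] at h1
    omega
  · intro h1 _
    by_contra hc
    push_neg at hc
    have hcle : cplx n ≤ 3*b+4 := by omega
    have : f (cplx n) ≤ f (3*b+4) := f_mono hpos hcle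
    rw [f_3a1 b] at this
    omega
end

section
/- For every positive integer n and every natural number k, the number of Boolean functions f : (Fin n → ZMod 2) → ZMod 2 with C_n(f) = k is at most A_k, where the sequence (A_k) is defined by A₀ = 2, A₁ = 2n, and A_k = 4·∑_{j=1}^{k−1} A_j · A_{k−j} for k ≥ 2. -/
/-- Expressions for Boolean functions of `n` variables, built from the constants
0 and 1 and the coordinate projections using addition and multiplication. -/
inductive BExpr (n : ℕ) : Type where
  | zero : BExpr n
  | one : BExpr n
  | proj (j : Fin n) : BExpr n
  | add (a b : BExpr n) : BExpr n
  | mul (a b : BExpr n) : BExpr n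

/-- Pointwise evaluation of a Boolean expression. -/
def BExpr.eval {n : ℕ} : BExpr n → (Fin n → ZMod 2) → ZMod 2
  | .zero, _ => 0
  | .one, _ => 1
  | .proj j, x => x j
  | .add a b, x => a.eval x + b.eval x
  | .mul a b, x => a.eval x * b.eval x

/-- The cost of a Boolean expression: the total number of occurrences of the
projections (constants cost 0, each projection costs 1). -/
def BExpr.cost {n : ℕ} : BExpr n → ℕ
  | .zero => 0
  | .one => 0
  | .proj _ => 1
  | .add a b => a.cost + b.cost
  | .mul a b => a.cost + b.cost

/-- The complexity of a Boolean function: the least total number of occurrences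
of projections in an expression representing it. -/
noncomputable def bcplx (n : ℕ) (f : (Fin n → ZMod 2) → ZMod 2) : ℕ :=
  sInf {k | ∃ e : BExpr n, e.eval = f ∧ e.cost = k}

namespace BExpr

lemma zmod2_cases (c : ZMod 2) : c = 0 ∨ c = 1 := by revert c; decide

lemma eval_const_of_cost_zero {n : ℕ} (e : BExpr n) (h : e.cost = 0) :
    ∃ c, e.eval = fun _ => c := by
  induction e with
  | zero => exact ⟨0, rfl⟩
  | one => exact ⟨1, rfl⟩
  | proj j => simp [cost] at h
  | add a b ha hb =>
      simp only [cost, Nat.add_eq_zero] at h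
      obtain ⟨c, hc⟩ := ha h.1
      obtain ⟨d, hd⟩ := hb h.2
      exact ⟨c + d, by funext x; simp [eval, hc, hd]⟩
  | mul a b ha hb =>
      simp only [cost, Nat.add_eq_zero] at h
      obtain ⟨c, hc⟩ := ha h.1
      obtain ⟨d, hd⟩ := hb h.2
      exact ⟨c * d, by funext x; simp [eval, hc, hd]⟩

lemma eval_of_cost_le_one {n : ℕ} (e : BExpr n) (h : e.cost ≤ 1) :
    (∃ c, e.eval = fun _ => c) ∨ ∃ (c : ZMod 2) (j : Fin n), e.eval = fun x => c + x j := by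
  induction e with
  | zero => exact Or.inl ⟨0, rfl⟩
  | one => exact Or.inl ⟨1, rfl⟩
  | proj j => exact Or.inr ⟨0, j, by funext x; simp [eval]⟩
  | add a b ha hb =>
      simp only [cost] at h
      by_cases h1 : a.cost = 0
      · obtain ⟨c, hc⟩ := eval_const_of_cost_zero a h1
        rcases hb (by omega) with ⟨d, hd⟩ | ⟨d, j, hd⟩
        · exact Or.inl ⟨c + d, by funext x; simp [eval, hc, hd]⟩
        · exact Or.inr ⟨c + d, j, by funext x; simp [eval, hc, hd]; ring⟩
      · have h2 : b.cost = 0 := by omega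
        obtain ⟨c, hc⟩ := eval_const_of_cost_zero b h2
        rcases ha (by omega) with ⟨d, hd⟩ | ⟨d, j, hd⟩
        · exact Or.inl ⟨d + c, by funext x; simp [eval, hc, hd]⟩
        · exact Or.inr ⟨d + c, j, by funext x; simp [eval, hc, hd]; ring⟩
  | mul a b ha hb =>
      simp only [cost] at h
      by_cases h1 : a.cost = 0
      · obtain ⟨c, hc⟩ := eval_const_of_cost_zero a h1
        rcases zmod2_cases c with rfl | rfl
        · exact Or.inl ⟨0, by funext x; simp [eval, hc]⟩
        · rcases hb (by omega) with ⟨d, hd⟩ | ⟨d, j, hd⟩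
          · exact Or.inl ⟨d, by funext x; simp [eval, hc, hd]⟩
          · exact Or.inr ⟨d, j, by funext x; simp [eval, hc, hd]⟩
      · have h2 : b.cost = 0 := by omega
        obtain ⟨c, hc⟩ := eval_const_of_cost_zero b h2
        rcases zmod2_cases c with rfl | rfl
        · exact Or.inl ⟨0, by funext x; simp [eval, hc]⟩
        · rcases ha (by omega) with ⟨d, hd⟩ | ⟨d, j, hd⟩
          · exact Or.inl ⟨d, by funext x; simp [eval, hc, hd]⟩
          · exact Or.inr ⟨d, j, by funext x; simp [eval, hc, hd]⟩

def liftS {n : ℕ} : BExpr n → BExpr (n + 1)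
  | .zero => .zero
  | .one => .one
  | .proj j => .proj j.succ
  | .add a b => .add (liftS a) (liftS b)
  | .mul a b => .mul (liftS a) (liftS b)

lemma eval_liftS {n : ℕ} (e : BExpr n) (x : Fin (n + 1) → ZMod 2) :
    (liftS e).eval x = e.eval (fun j => x j.succ) := by
  induction e <;> simp [liftS, eval, *]

lemma exists_expr : ∀ {n : ℕ} (f : (Fin n → ZMod 2) → ZMod 2), ∃ e : BExpr n, e.eval = f := by
  intro n
  induction n with
  | zero =>
      intro f
      rcases zmod2_cases (f (fun i => i.elim0)) with h | h
      · refine ⟨.zero, funext fun x => ?_⟩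
        have : x = fun i => i.elim0 := Subsingleton.elim _ _
        rw [this, h]; rfl
      · refine ⟨.one, funext fun x => ?_⟩
        have : x = fun i => i.elim0 := Subsingleton.elim _ _
        rw [this, h]; rfl
  | succ n ih =>
      intro f
      obtain ⟨e0, he0⟩ := ih (fun y => f (Fin.cons 0 y))
      obtain ⟨e1, he1⟩ := ih (fun y => f (Fin.cons 1 y))
      refine ⟨.add (.mul (.add .one (.proj 0)) (liftS e0)) (.mul (.proj 0) (liftS e1)),
        funext fun x => ?_⟩
      have hx : f x = f (Fin.cons (x 0) (fun j => x j.succ)) := by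
        congr 1
        exact (Fin.cons_self_tail x).symm
      simp only [eval, eval_liftS, he0, he1, hx]
      rcases zmod2_cases (x 0) with h | h <;> rw [h] <;>
        simp [show (1:ZMod 2)+1 = 0 from rfl]

end BExpr

namespace BExpr

def constE (n : ℕ) (c : ZMod 2) : BExpr n := if c = 0 then .zero else .one

lemma eval_constE (n : ℕ) (c : ZMod 2) : (constE n c).eval = fun _ => c := by
  unfold constE
  rcases zmod2_cases c with rfl | rfl <;> simp <;> rfl

lemma cost_constE (n : ℕ) (c : ZMod 2) : (constE n c).cost = 0 := by
  unfold constE; split <;> rfl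

lemma decomp {n : ℕ} (e : BExpr n) (h : 2 ≤ e.cost) :
    (∃ c, e.eval = fun _ => c) ∨
    ∃ (c : ZMod 2) (op : Bool) (a b : BExpr n),
      1 ≤ a.cost ∧ 1 ≤ b.cost ∧ a.cost + b.cost ≤ e.cost ∧
      e.eval = fun x => c + (if op then a.eval x * b.eval x else a.eval x + b.eval x) := by
  induction e with
  | zero => simp [cost] at h
  | one => simp [cost] at h
  | proj j => simp [cost] at h
  | add a b ha hb =>
      simp only [cost] at h ⊢
      by_cases h1 : 1 ≤ a.cost
      · by_cases h2 : 1 ≤ b.cost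
        · exact Or.inr ⟨0, false, a, b, h1, h2, le_rfl, by funext x; simp [eval]⟩
        · obtain ⟨c, hc⟩ := eval_const_of_cost_zero b (by omega)
          rcases ha (by omega) with ⟨d, hd⟩ | ⟨d, op, a1, b1, k1, k2, k3, k4⟩
          · exact Or.inl ⟨d + c, by funext x; simp [eval, hc, hd]⟩
          · refine Or.inr ⟨d + c, op, a1, b1, k1, k2, by omega, ?_⟩
            funext x
            simp only [eval, hc, k4]
            ring
      · obtain ⟨c, hc⟩ := eval_const_of_cost_zero a (by omega)
        rcases hb (by omega) with ⟨d, hd⟩ | ⟨d, op, a1, b1, k1, k2, k3, k4⟩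
        · exact Or.inl ⟨c + d, by funext x; simp [eval, hc, hd]⟩
        · refine Or.inr ⟨c + d, op, a1, b1, k1, k2, by omega, ?_⟩
          funext x
          simp only [eval, hc, k4]
          ring
  | mul a b ha hb =>
      simp only [cost] at h ⊢
      by_cases h1 : 1 ≤ a.cost
      · by_cases h2 : 1 ≤ b.cost
        · exact Or.inr ⟨0, true, a, b, h1, h2, le_rfl, by funext x; simp [eval]⟩
        · obtain ⟨c, hc⟩ := eval_const_of_cost_zero b (by omega)
          rcases zmod2_cases c with rfl | rfl
          · exact Or.inl ⟨0, by funext x; simp [eval, hc]⟩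
          · rcases ha (by omega) with ⟨d, hd⟩ | ⟨d, op, a1, b1, k1, k2, k3, k4⟩
            · exact Or.inl ⟨d, by funext x; simp [eval, hc, hd]⟩
            · refine Or.inr ⟨d, op, a1, b1, k1, k2, by omega, ?_⟩
              funext x
              simp only [eval, hc, k4, mul_one]
      · obtain ⟨c, hc⟩ := eval_const_of_cost_zero a (by omega)
        rcases zmod2_cases c with rfl | rfl
        · exact Or.inl ⟨0, by funext x; simp [eval, hc]⟩
        · rcases hb (by omega) with ⟨d, hd⟩ | ⟨d, op, a1, b1, k1, k2, k3, k4⟩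
          · exact Or.inl ⟨d, by funext x; simp [eval, hc, hd]⟩
          · refine Or.inr ⟨d, op, a1, b1, k1, k2, by omega, ?_⟩
            funext x
            simp only [eval, hc, k4, one_mul]

end BExpr

lemma bcplx_le {n : ℕ} (f : (Fin n → ZMod 2) → ZMod 2) (e : BExpr n) (he : e.eval = f) :
    bcplx n f ≤ e.cost :=
  Nat.sInf_le ⟨e, he, rfl⟩

lemma exists_min {n : ℕ} (f : (Fin n → ZMod 2) → ZMod 2) :
    ∃ e : BExpr n, e.eval = f ∧ e.cost = bcplx n f := by
  have hne : {k | ∃ e : BExpr n, e.eval = f ∧ e.cost = k}.Nonempty := by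
    obtain ⟨e, he⟩ := BExpr.exists_expr f
    exact ⟨e.cost, e, he, rfl⟩
  exact Nat.sInf_mem hne

lemma bcplx_const {n : ℕ} (c : ZMod 2) : bcplx n (fun _ => c) = 0 := by
  have h := bcplx_le (fun _ => c) (BExpr.constE n c) (BExpr.eval_constE n c)
  rw [BExpr.cost_constE] at h
  omega

theorem stmt13 (n : ℕ) (hn : 0 < n) (A : ℕ → ℕ)
    (hA0 : A 0 = 2) (hA1 : A 1 = 2 * n)
    (hArec : ∀ k : ℕ, 2 ≤ k → A k = 4 * ∑ j ∈ Finset.Ico 1 k, A j * A (k - j)) :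
    ∀ k : ℕ, Nat.card {f : (Fin n → ZMod 2) → ZMod 2 // bcplx n f = k} ≤ A k := by
  classical
  set S : ℕ → Finset ((Fin n → ZMod 2) → ZMod 2) :=
    fun k => Finset.univ.filter (fun f => bcplx n f = k) with hS
  have hmemS : ∀ k f, f ∈ S k ↔ bcplx n f = k := by
    intro k f; simp [hS]
  have hcard : ∀ k, Nat.card {f : (Fin n → ZMod 2) → ZMod 2 // bcplx n f = k} = (S k).card := by
    intro k
    rw [Nat.card_eq_fintype_card, Fintype.card_subtype]
  suffices H : ∀ k, (S k).card ≤ A k by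
    intro k; rw [hcard]; exact H k
  intro k
  induction k using Nat.strong_induction_on with
  | _ k IH =>
  rcases k with _ | _ | k
  · -- k = 0
    have hsub : S 0 ⊆ Finset.image (fun c : ZMod 2 => fun _ => c) Finset.univ := by
      intro f hf
      rw [hmemS] at hf
      obtain ⟨e, he, hc⟩ := exists_min f
      rw [hf] at hc
      obtain ⟨c, hcc⟩ := BExpr.eval_const_of_cost_zero e hc
      simp only [Finset.mem_image, Finset.mem_univ, true_and]
      exact ⟨c, by rw [← he, hcc]⟩
    calc (S 0).card ≤ _ := Finset.card_le_card hsub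
      _ ≤ (Finset.univ : Finset (ZMod 2)).card := Finset.card_image_le
      _ = 2 := by simp
      _ = A 0 := hA0.symm
  · -- k = 1
    have hsub : S 1 ⊆ Finset.image
        (fun p : ZMod 2 × Fin n => fun x => p.1 + x p.2) Finset.univ := by
      intro f hf
      rw [hmemS] at hf
      obtain ⟨e, he, hc⟩ := exists_min f
      rw [hf] at hc
      rcases BExpr.eval_of_cost_le_one e (by omega) with ⟨c, hcc⟩ | ⟨c, j, hcc⟩
      · exfalso
        have : f = fun _ => c := by rw [← he, hcc]
        rw [this, bcplx_const] at hf
        omega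
      · simp only [Finset.mem_image, Finset.mem_univ, true_and]
        exact ⟨(c, j), by rw [← he, hcc]⟩
    calc (S 1).card ≤ _ := Finset.card_le_card hsub
      _ ≤ (Finset.univ : Finset (ZMod 2 × Fin n)).card := Finset.card_image_le
      _ = 2 * n := by simp [Finset.card_univ]
      _ = A 1 := hA1.symm
  · -- k + 2
    set K := k + 2 with hK
    set P : Finset (((Fin n → ZMod 2) → ZMod 2) × ((Fin n → ZMod 2) → ZMod 2)) :=
      (Finset.Ico 1 K).biUnion (fun j => S j ×ˢ S (K - j)) with hP
    set Ψ : ZMod 2 × Bool × (((Fin n → ZMod 2) → ZMod 2) × ((Fin n → ZMod 2) → ZMod 2)) →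
        ((Fin n → ZMod 2) → ZMod 2) :=
      fun p => fun x => p.1 + (if p.2.1 then p.2.2.1 x * p.2.2.2 x else p.2.2.1 x + p.2.2.2 x)
      with hΨ
    have hsub : S K ⊆ Finset.image Ψ ((Finset.univ : Finset (ZMod 2)) ×ˢ
        ((Finset.univ : Finset Bool) ×ˢ P)) := by
      intro f hf
      rw [hmemS] at hf
      obtain ⟨e, he, hc⟩ := exists_min f
      rw [hf] at hc
      rcases BExpr.decomp e (by omega) with ⟨c, hcc⟩ | ⟨c, op, a, b, k1, k2, k3, k4⟩
      · exfalso
        have : f = fun _ => c := by rw [← he, hcc]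
        rw [this, bcplx_const] at hf
        omega
      · set g := a.eval with hg
        set h := b.eval with hh
        have hj : bcplx n g ≤ a.cost := bcplx_le g a rfl
        have hm : bcplx n h ≤ b.cost := bcplx_le h b rfl
        obtain ⟨eg, heg, hcg⟩ := exists_min g
        obtain ⟨eh, heh, hch⟩ := exists_min h
        have hfx : ∀ x, f x = c + (if op then g x * h x else g x + h x) := by
          intro x; rw [← he, k4]
        have hKle : K ≤ bcplx n g + bcplx n h := by
          rcases op with _ | _
          · have := bcplx_le f (BExpr.add (BExpr.constE n c) (BExpr.add eg eh)) ?_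
            · simp only [BExpr.cost, BExpr.cost_constE, hcg, hch] at this
              omega
            · funext x
              simp [BExpr.eval, BExpr.eval_constE, heg, heh, hfx x]
          · have := bcplx_le f (BExpr.add (BExpr.constE n c) (BExpr.mul eg eh)) ?_
            · simp only [BExpr.cost, BExpr.cost_constE, hcg, hch] at this
              omega
            · funext x
              simp [BExpr.eval, BExpr.eval_constE, heg, heh, hfx x]
        have hjm : 1 ≤ bcplx n g ∧ bcplx n g < K ∧ bcplx n h = K - bcplx n g := by
          omega
        refine Finset.mem_image.mpr ⟨(c, op, g, h), ?_, ?_⟩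
        · simp only [Finset.mem_product, Finset.mem_univ, true_and, hP, Finset.mem_biUnion]
          refine ⟨bcplx n g, Finset.mem_Ico.mpr ⟨hjm.1, hjm.2.1⟩, ?_⟩
          exact ⟨(hmemS _ _).mpr rfl, (hmemS _ _).mpr hjm.2.2⟩
        · funext x
          rw [hfx x]
    have h1 : (S K).card ≤ 4 * P.card := by
      calc (S K).card ≤ _ := Finset.card_le_card hsub
        _ ≤ ((Finset.univ : Finset (ZMod 2)) ×ˢ
            ((Finset.univ : Finset Bool) ×ˢ P)).card := Finset.card_image_le
        _ = 2 * (2 * P.card) := by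
            rw [Finset.card_product, Finset.card_product]
            simp
        _ = 4 * P.card := by ring
    have h2 : P.card ≤ ∑ j ∈ Finset.Ico 1 K, (S j).card * (S (K - j)).card := by
      refine le_trans (Finset.card_biUnion_le) ?_
      refine Finset.sum_le_sum ?_
      intro j hj
      rw [Finset.card_product]
    have h3 : ∑ j ∈ Finset.Ico 1 K, (S j).card * (S (K - j)).card ≤
        ∑ j ∈ Finset.Ico 1 K, A j * A (K - j) := by
      refine Finset.sum_le_sum ?_
      intro j hj
      rw [Finset.mem_Ico] at hj
      exact Nat.mul_le_mul (IH j (by omega)) (IH (K - j) (by omega))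
    calc (S K).card ≤ 4 * P.card := h1
      _ ≤ 4 * ∑ j ∈ Finset.Ico 1 K, A j * A (K - j) := by
          refine Nat.mul_le_mul_left 4 (le_trans h2 h3)
      _ = A K := (hArec K (by omega)).symm
end

section
/- Let n be a positive integer and define the sequence (A_k) by A₀ = 2, A₁ = 2n, and A_k = 4·∑_{j=1}^{k−1} A_j · A_{k−j} for k ≥ 2. Then for every k ≥ 2, A_k = (1 / (2(2k − 2))) · C(2k − 2, k) · (8n)^k, where C(·,·) denotes the binomial coefficient. -/
lemma cat_range (m : ℕ) :
    catalan (m + 1) = ∑ i ∈ Finset.range (m + 1), catalan i * catalan (m - i) := by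
  rw [catalan_succ, Finset.sum_range fun i => catalan i * catalan (m - i)]

lemma key_nat (k : ℕ) (hk : 2 ≤ k) :
    (k - 1) * catalan (k - 1) = (2 * k - 2).choose k := by
  have h1 : k * ((k - 1) * catalan (k - 1)) = (2 * k - 2).choose k * k := by
    have h2 : (2 * k - 2).choose ((k - 1) + 1) * ((k - 1) + 1)
        = (2 * k - 2).choose (k - 1) * (2 * k - 2 - (k - 1)) :=
      Nat.choose_succ_right_eq _ _
    have hk1 : (k - 1) + 1 = k := by omega
    have hcb : k * catalan (k - 1) = (2 * (k - 1)).choose (k - 1) := by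
      have := succ_mul_catalan_eq_centralBinom (k - 1)
      rwa [hk1, Nat.centralBinom_eq_two_mul_choose] at this
    have h3 : 2 * (k - 1) = 2 * k - 2 := by omega
    have h4 : 2 * k - 2 - (k - 1) = k - 1 := by omega
    rw [hk1] at h2
    rw [h3] at hcb
    calc k * ((k - 1) * catalan (k - 1)) = (k - 1) * (k * catalan (k - 1)) := by ring
      _ = (k - 1) * (2 * k - 2).choose (k - 1) := by rw [hcb]
      _ = (2 * k - 2).choose (k - 1) * (2 * k - 2 - (k - 1)) := by rw [h4]; ring
      _ = (2 * k - 2).choose k * k := by rw [← h2]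
  have hkpos : 0 < k := by omega
  have h1' : k * ((k - 1) * catalan (k - 1)) = k * (2 * k - 2).choose k := by
    rw [h1]; ring
  exact Nat.eq_of_mul_eq_mul_left hkpos h1'

lemma aux (n : ℕ) (A : ℕ → ℕ) (hA1 : A 1 = 2 * n)
    (hArec : ∀ k : ℕ, 2 ≤ k → A k = 4 * ∑ j ∈ Finset.Ico 1 k, A j * A (k - j)) :
    ∀ k : ℕ, 1 ≤ k → A k = 2 * 8 ^ (k - 1) * catalan (k - 1) * n ^ k := by
  intro k
  induction k using Nat.strong_induction_on with
  | _ k ih =>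
    intro hk1
    rcases eq_or_lt_of_le hk1 with h1 | h2
    · subst h1; simp [hA1, catalan_zero]
    · have hk2 : 2 ≤ k := h2
      rw [hArec k hk2]
      have hsum : ∑ j ∈ Finset.Ico 1 k, A j * A (k - j)
          = ∑ j ∈ Finset.Ico 1 k,
            4 * 8 ^ (k - 2) * n ^ k * (catalan (j - 1) * catalan (k - j - 1)) := by
        apply Finset.sum_congr rfl
        intro j hj
        rw [Finset.mem_Ico] at hj
        obtain ⟨hj1, hjk⟩ := hj
        have h1 : A j = 2 * 8 ^ (j - 1) * catalan (j - 1) * n ^ j :=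
          ih j hjk hj1
        have h2 : A (k - j) = 2 * 8 ^ (k - j - 1) * catalan (k - j - 1) * n ^ (k - j) :=
          ih (k - j) (by omega) (by omega)
        rw [h1, h2]
        have hp : (8:ℕ) ^ (j - 1) * 8 ^ (k - j - 1) = 8 ^ (k - 2) := by
          rw [← pow_add]; congr 1; omega
        have hn : (n:ℕ) ^ j * n ^ (k - j) = n ^ k := by
          rw [← pow_add]; congr 1; omega
        calc 2 * 8 ^ (j - 1) * catalan (j - 1) * n ^ j *
              (2 * 8 ^ (k - j - 1) * catalan (k - j - 1) * n ^ (k - j))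
            = 4 * (8 ^ (j - 1) * 8 ^ (k - j - 1)) * (n ^ j * n ^ (k - j)) *
              (catalan (j - 1) * catalan (k - j - 1)) := by ring
          _ = _ := by rw [hp, hn]
      rw [hsum, ← Finset.mul_sum]
      have hre : ∑ j ∈ Finset.Ico 1 k, catalan (j - 1) * catalan (k - j - 1)
          = ∑ i ∈ Finset.range (k - 1), catalan i * catalan (k - 2 - i) := by
        rw [Finset.sum_Ico_eq_sum_range]
        apply Finset.sum_congr rfl
        intro i hi
        rw [Finset.mem_range] at hi
        congr 2 <;> omega
      have hcat : ∑ i ∈ Finset.range (k - 1), catalan i * catalan (k - 2 - i)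
          = catalan (k - 1) := by
        have := cat_range (k - 2)
        have h : k - 2 + 1 = k - 1 := by omega
        rw [h] at this
        rw [this]
      rw [hre, hcat]
      have h8 : (8:ℕ) ^ (k - 1) = 8 * 8 ^ (k - 2) := by
        rw [← pow_succ']; congr 1; omega
      rw [h8]; ring

theorem stmt14 (n : ℕ) (hn : 0 < n) (A : ℕ → ℕ)
    (hA0 : A 0 = 2) (hA1 : A 1 = 2 * n)
    (hArec : ∀ k : ℕ, 2 ≤ k → A k = 4 * ∑ j ∈ Finset.Ico 1 k, A j * A (k - j)) :
    ∀ k : ℕ, 2 ≤ k →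
      (A k : ℝ) = 1 / (2 * (2 * (k : ℝ) - 2)) * ((2 * k - 2).choose k : ℝ)
        * (8 * (n : ℝ)) ^ k := by
  intro k hk
  have hformula := aux n A hA1 hArec k (by omega)
  have hkey := key_nat k hk
  have hk1 : (1:ℝ) ≤ (k:ℝ) := by exact_mod_cast Nat.one_le_iff_ne_zero.mpr (by omega)
  have hkne : (k:ℝ) - 1 ≠ 0 := by
    have : (2:ℝ) ≤ (k:ℝ) := by exact_mod_cast hk
    linarith
  have hcast : ((2 * k - 2).choose k : ℝ) = ((k:ℝ) - 1) * (catalan (k - 1) : ℝ) := by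
    rw [← hkey]
    push_cast [Nat.cast_sub (show 1 ≤ k by omega)]
    ring
  rw [hformula, hcast]
  push_cast
  have h8 : ((8:ℝ)) ^ (k - 1) * 8 = 8 ^ k := by
    rw [← pow_succ]; congr 1; omega
  have hfield : 1 / (2 * (2 * (k:ℝ) - 2)) * (((k:ℝ) - 1) * (catalan (k - 1) : ℝ))
      = (catalan (k - 1) : ℝ) / 4 := by
    rw [div_mul_eq_mul_div, one_mul,
      show (2:ℝ) * (2 * (k:ℝ) - 2) = ((k:ℝ) - 1) * 4 by ring]
    exact mul_div_mul_left _ _ hkne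
  rw [hfield, mul_pow]
  rw [← h8]
  ring
end
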